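/- arXiv:2511.02883 — 4 statements merged into one kernel-verified Lean document; each statement's English description precedes it below -/
import Mathlib

section
/- Let m be a non-negative integer and let q be an integer partition of m. Then for every real number x, the sum over all integer partitions p of m of (x^{\underline{|[p]|}} / [p]!) · N(p,q) equals x^{\underline{q}} / q!, i.e. ∑_{p ⊢ m} (x^{\underline{|[p]|}} / [p]!) N(p,q) = ∏_{i} x^{\underline{q_i}} / q_i!. -/
open Finset

/-- Falling factorial of a real number: `x (x-1) ⋯ (x-n+1)`. -/
def fallFac (x : ℝ) (n : ℕ) : ℝ := ∏ i ∈ Finset.range n, (x - i)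

/-- `[p]!`: the product of the factorials of the multiplicities of the parts of `p`. -/
def multFact {m : ℕ} (p : Nat.Partition m) : ℕ :=
  ∏ i ∈ p.parts.toFinset, Nat.factorial (p.parts.count i)

/-- The parts of a partition, as a list, sorted in decreasing order. -/
def partsList {m : ℕ} (p : Nat.Partition m) : List ℕ := p.parts.sort (· ≥ ·)

/-- `N(p,q)`: the number of `|[p]| × |[q]|` binary matrices whose row sums are given
by `p` and whose column sums are given by `q`. -/
noncomputable def Nmat {m : ℕ} (p q : Nat.Partition m) : ℕ :=
  Nat.card {M : Matrix (Fin (Multiset.card p.parts)) (Fin (Multiset.card q.parts)) Bool //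
    (∀ i, (∑ j, if M i j then 1 else 0) = (partsList p).getD i 0) ∧
    (∀ j, (∑ i, if M i j then 1 else 0) = (partsList q).getD j 0)}

/-!
For `x = n` a natural number, both sides count the `n × |[q]|` binary matrices whose column sums
are the parts of `q`: the right side column by column, the left side grouped by the partition `p`
formed by the nonzero row sums. A matrix in the group of `p` arises from a pair `(e, M)`, with `M`
one of the `N(p,q)` matrices and `e` one of the `n^{\underline{|[p]|}}` injections of its rows into
the `n` rows, in exactly `[p]!` ways, one for each rearrangement of rows with equal sums.
Both sides are polynomials in `x`, so agreement at all natural numbers gives the identity.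
-/

section FiberwiseEmbedding

variable {α β γ : Type*} [Fintype α] [Fintype β] [DecidableEq γ]

theorem card_embedding_fiberwise [DecidableEq α] [DecidableEq β] (f : α → γ) (g : β → γ) :
    Fintype.card {e : α ↪ β // ∀ a, g (e a) = f a}
      = ∏ c ∈ univ.image f, (#{b | g b = c}).descFactorial #{a | f a = c} := by
  let E : {e : α ↪ β // ∀ a, g (e a) = f a}
      ≃ ∀ c : univ.image f, ({a // f a = c} ↪ {b // g b = c}) :=
    { toFun e c := ⟨fun a => ⟨e.1 a, (e.2 a).trans a.2⟩,
        fun a a' h => Subtype.ext (e.1.injective (congrArg Subtype.val h))⟩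
      invFun F := by
        have hinj : ∀ {c c'} (x : {a // f a = c.1}) (y : {a // f a = c'.1}),
            (F c x : β) = F c' y → (x : α) = y := by
          intro c c' x y h
          obtain rfl : c = c' :=
            Subtype.ext (((F c x).2.symm.trans (congrArg g h)).trans (F c' y).2)
          exact congrArg Subtype.val ((F c).injective (Subtype.ext h))
        exact ⟨⟨fun a => F ⟨f a, mem_image_of_mem f (mem_univ a)⟩ ⟨a, rfl⟩,
          fun a a' h => hinj _ _ h⟩, fun a => (F _ ⟨a, rfl⟩).2⟩
      left_inv e := rfl
      right_inv F := by
        funext ⟨c, hc⟩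
        refine DFunLike.ext _ _ fun ⟨a, ha⟩ => ?_
        change f a = c at ha
        subst ha
        rfl }
  rw [Fintype.card_congr E, Fintype.card_pi, ← prod_coe_sort (univ.image f)]
  refine Fintype.prod_congr _ _ fun c => ?_
  rw [Fintype.card_embedding_eq, Fintype.card_subtype, Fintype.card_subtype]

theorem mem_range_of_card_fiber_le {f : β → γ} {r : α → γ} (e : α ↪ β)
    (he : ∀ a, f (e a) = r a) {b : β} (hb : #{b' | f b' = f b} ≤ #{a | r a = f b}) :
    b ∈ Set.range e := by
  classical
  by_contra hne
  have hsub : ({a | r a = f b} : Finset α).map e ⊆ ({b' | f b' = f b} : Finset β).erase b := by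
    intro b' hb'
    obtain ⟨a, ha, rfl⟩ := mem_map.mp hb'
    rw [mem_filter] at ha
    exact mem_erase.mpr ⟨fun h => hne ⟨a, h⟩, mem_filter.mpr ⟨mem_univ _, (he a).trans ha.2⟩⟩
  have hle := card_le_card hsub
  rw [card_map, card_erase_of_mem (by simp)] at hle
  have hpos : 0 < #{b' | f b' = f b} := card_pos.mpr ⟨b, by simp⟩
  omega

theorem card_filter_comp_embedding (e : α ↪ β) {P : β → Prop} [DecidablePred P]
    (hP : ∀ b ∉ Set.range e, ¬ P b) : #{b | P b} = #{a | P (e a)} := by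
  rw [← card_map e]
  congr 1
  ext b
  simp only [mem_filter, mem_univ, true_and, mem_map]
  constructor
  · intro hb
    by_contra h
    exact hP b (fun ⟨a, ha⟩ => h ⟨a, ha ▸ hb, ha⟩) hb
  · rintro ⟨a, ha, rfl⟩
    exact ha

end FiberwiseEmbedding

theorem card_filter_eq_count_map {α β : Type*} [Fintype α] [DecidableEq β] (f : α → β) (b : β) :
    #{a | f a = b} = (univ.val.map f).count b := by
  rw [Multiset.count_map, card_def, filter_val]
  simp only [eq_comm]

section BinaryMatrix

variable {α ι κ : Type*}

def rowSum [Fintype κ] (A : ι → κ → Bool) (i : ι) : ℕ := #{j | A i j}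

def colSum [Fintype ι] (A : ι → κ → Bool) (j : κ) : ℕ := #{i | A i j}

theorem sum_rowSum_eq_sum_colSum [Fintype ι] [Fintype κ] (A : ι → κ → Bool) :
    ∑ i, rowSum A i = ∑ j, colSum A j := by
  simp only [rowSum, colSum, card_filter]
  exact sum_comm

theorem rowSum_eq_zero_iff [Fintype κ] {A : ι → κ → Bool} {i : ι} :
    rowSum A i = 0 ↔ A i = fun _ => false := by
  simp [rowSum, funext_iff]

theorem card_colSum_eq [Fintype ι] [Fintype κ] (c : κ → ℕ) :
    Nat.card {A : ι → κ → Bool // ∀ j, colSum A j = c j} = ∏ j, (Fintype.card ι).choose (c j) := by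
  classical
  let E : {A : ι → κ → Bool // ∀ j, colSum A j = c j} ≃ ∀ j, {s : Finset ι // #s = c j} :=
    { toFun A j := ⟨({i | A.1 i j} : Finset ι), A.2 j⟩
      invFun S := ⟨fun i j => decide (i ∈ (S j).1), fun j => by simpa [colSum] using (S j).2⟩
      left_inv A := by ext i j; simp
      right_inv S := by ext j i; simp }
  rw [Nat.card_congr E, Nat.card_pi]
  simp [Nat.card_eq_fintype_card, Fintype.card_finset_len]

noncomputable def extendRows (e : α ↪ ι) (M : α → κ → Bool) : ι → κ → Bool :=
  Function.extend e M fun _ _ => false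

theorem extendRows_apply (e : α ↪ ι) (M : α → κ → Bool) (a : α) :
    extendRows e M (e a) = M a :=
  e.injective.extend_apply _ _ _

theorem extendRows_of_notMem_range (e : α ↪ ι) (M : α → κ → Bool) {i : ι}
    (hi : i ∉ Set.range e) : extendRows e M i = fun _ => false :=
  Function.extend_apply' _ _ _ hi

theorem rowSum_extendRows_apply [Fintype κ] (e : α ↪ ι) (M : α → κ → Bool) (a : α) :
    rowSum (extendRows e M) (e a) = rowSum M a := by
  rw [rowSum, extendRows_apply, rowSum]

theorem rowSum_extendRows_of_notMem_range [Fintype κ] (e : α ↪ ι) (M : α → κ → Bool) {i : ι}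
    (hi : i ∉ Set.range e) : rowSum (extendRows e M) i = 0 :=
  rowSum_eq_zero_iff.mpr (extendRows_of_notMem_range e M hi)

theorem colSum_extendRows [Fintype α] [Fintype ι] (e : α ↪ ι) (M : α → κ → Bool) (j : κ) :
    colSum (extendRows e M) j = colSum M j := by
  rw [colSum, card_filter_comp_embedding e fun i hi => by simp [extendRows_of_notMem_range e M hi]]
  simp only [extendRows_apply, colSum]

theorem card_rowSum_extendRows_eq [Fintype α] [Fintype ι] [Fintype κ] (e : α ↪ ι)
    (M : α → κ → Bool) {b : ℕ} (hb : b ≠ 0) :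
    #{i | rowSum (extendRows e M) i = b} = #{a | rowSum M a = b} := by
  rw [card_filter_comp_embedding e fun i hi => by
    rwa [rowSum_extendRows_of_notMem_range e M hi, eq_comm]]
  simp only [rowSum_extendRows_apply]

end BinaryMatrix

section DoubleCounting

variable {α ι κ : Type*} [Fintype α] [Fintype ι] [Fintype κ]

theorem card_embedding_rowSum_eq [DecidableEq α] [DecidableEq ι] (r : α → ℕ) (hr : ∀ a, r a ≠ 0)
    (A : ι → κ → Bool) (hA : ∀ b ≠ 0, #{i | rowSum A i = b} = #{a | r a = b}) :
    Nat.card {e : α ↪ ι // ∀ a, rowSum A (e a) = r a}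
      = ∏ b ∈ univ.image r, (#{a | r a = b}).factorial := by
  rw [Nat.card_eq_fintype_card, card_embedding_fiberwise]
  refine prod_congr rfl fun b hb => ?_
  obtain ⟨a, -, rfl⟩ := mem_image.mp hb
  rw [hA _ (hr a), Nat.descFactorial_self]

theorem rowSum_eq_zero_of_notMem_range (r : α → ℕ) (A : ι → κ → Bool)
    (hA : ∀ b ≠ 0, #{i | rowSum A i = b} = #{a | r a = b}) (e : α ↪ ι)
    (he : ∀ a, rowSum A (e a) = r a) {i : ι} (hi : i ∉ Set.range e) : rowSum A i = 0 := by
  by_contra h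
  exact hi (mem_range_of_card_fiber_le e he (hA _ h).le)

theorem card_embedding_mul_card_rowSum_colSum [DecidableEq α] [DecidableEq ι]
    (r : α → ℕ) (hr : ∀ a, r a ≠ 0) (c : κ → ℕ) :
    Nat.card (α ↪ ι)
        * Nat.card {M : α → κ → Bool // (∀ a, rowSum M a = r a) ∧ ∀ j, colSum M j = c j}
      = Nat.card {A : ι → κ → Bool //
          (∀ j, colSum A j = c j) ∧ ∀ b ≠ 0, #{i | rowSum A i = b} = #{a | r a = b}}
        * ∏ b ∈ univ.image r, (#{a | r a = b}).factorial := by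
  classical
  let E : (α ↪ ι) × {M : α → κ → Bool // (∀ a, rowSum M a = r a) ∧ ∀ j, colSum M j = c j}
      ≃ Σ A : {A : ι → κ → Bool //
          (∀ j, colSum A j = c j) ∧ ∀ b ≠ 0, #{i | rowSum A i = b} = #{a | r a = b}},
        {e : α ↪ ι // ∀ a, rowSum A.1 (e a) = r a} :=
    { toFun := fun ⟨e, M⟩ =>
        ⟨⟨extendRows e M, fun j => (colSum_extendRows e M.1 j).trans (M.2.2 j), fun b hb => by
            simp only [card_rowSum_extendRows_eq e M.1 hb, M.2.1]⟩,
          ⟨e, fun a => (rowSum_extendRows_apply e M.1 a).trans (M.2.1 a)⟩⟩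
      invFun := fun ⟨A, e⟩ =>
        ⟨e, fun a => A.1 (e.1 a), e.2, fun j => by
          rw [← A.2.1 j, colSum, colSum, card_filter_comp_embedding e.1 fun i hi => by
            simp [rowSum_eq_zero_iff.mp (rowSum_eq_zero_of_notMem_range r A.1 A.2.2 e.1 e.2 hi)]]⟩
      left_inv := fun ⟨e, M⟩ => Prod.ext rfl (Subtype.ext (funext (extendRows_apply e M.1)))
      right_inv := fun ⟨A, e⟩ => by
        refine Sigma.subtype_ext (Subtype.ext (funext fun i => ?_)) rfl
        change extendRows e.1 (fun a => A.1 (e.1 a)) i = A.1 i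
        by_cases hi : i ∈ Set.range e.1
        · obtain ⟨a, rfl⟩ := hi
          exact extendRows_apply _ _ a
        · rw [extendRows_of_notMem_range _ _ hi,
            rowSum_eq_zero_iff.mp (rowSum_eq_zero_of_notMem_range r A.1 A.2.2 e.1 e.2 hi)] }
  rw [← Nat.card_prod, Nat.card_congr E, Nat.card_sigma,
    sum_congr rfl fun A _ => card_embedding_rowSum_eq r hr A.1 A.2.2, sum_const, card_univ,
    smul_eq_mul, Fintype.card_eq_nat_card]

end DoubleCounting

section Partition

variable {m : ℕ}

def sortedParts (p : Nat.Partition m) (i : Fin (Multiset.card p.parts)) : ℕ :=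
  (partsList p).getD i 0

theorem map_sortedParts (p : Nat.Partition m) : univ.val.map (sortedParts p) = p.parts := by
  rw [Fin.univ_val_map]
  conv_rhs => rw [← Multiset.sort_eq p.parts (· ≥ ·)]
  congr 1
  refine List.ext_getElem (by simp) fun i _ h => ?_
  rw [List.getElem_ofFn]
  exact List.getD_eq_getElem _ _ h

theorem sum_sortedParts (p : Nat.Partition m) : ∑ i, sortedParts p i = m := by
  rw [sum_eq_multiset_sum, map_sortedParts, p.parts_sum]

theorem card_sortedParts_eq (p : Nat.Partition m) (b : ℕ) :
    #{i | sortedParts p i = b} = p.parts.count b := by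
  rw [card_filter_eq_count_map, map_sortedParts]

theorem multFact_eq_prod_factorial (p : Nat.Partition m) :
    multFact p = ∏ b ∈ univ.image (sortedParts p), (#{i | sortedParts p i = b}).factorial := by
  have himage : univ.image (sortedParts p) = p.parts.toFinset :=
    congrArg Multiset.toFinset (map_sortedParts p)
  simp only [multFact, himage, card_sortedParts_eq]

theorem Nmat_eq_card (p q : Nat.Partition m) :
    Nmat p q = Nat.card {M : Fin (Multiset.card p.parts) → Fin (Multiset.card q.parts) → Bool //
      (∀ i, rowSum M i = sortedParts p i) ∧ ∀ j, colSum M j = sortedParts q j} := by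
  refine Nat.card_congr (Equiv.subtypeEquivRight fun M => ?_)
  simp [rowSum, colSum, sortedParts, sum_boole]

end Partition

section RowPartition

variable {m : ℕ} (q : Nat.Partition m)

abbrev ColSumMatrices (n : ℕ) : Type :=
  {A : Fin n → Fin (Multiset.card q.parts) → Bool // ∀ j, colSum A j = sortedParts q j}

def rowPartition {n : ℕ} (A : ColSumMatrices q n) : Nat.Partition m where
  parts := (univ.val.map (rowSum A.1)).filter (· ≠ 0)
  parts_pos h := Nat.pos_of_ne_zero (Multiset.mem_filter.mp h).2
  parts_sum := by
    rw [Multiset.filter_map]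
    change ∑ i with rowSum A.1 i ≠ 0, rowSum A.1 i = m
    rw [sum_filter_ne_zero, sum_rowSum_eq_sum_colSum,
      sum_congr rfl fun j _ => A.2 j, sum_sortedParts]

theorem rowPartition_eq_iff {n : ℕ} (A : ColSumMatrices q n) (p : Nat.Partition m) :
    rowPartition q A = p ↔ ∀ b ≠ 0, #{i | rowSum A.1 i = b} = #{i | sortedParts p i = b} := by
  rw [Nat.Partition.ext_iff, Multiset.ext]
  simp only [card_sortedParts_eq]
  simp only [card_filter_eq_count_map, rowPartition, Multiset.count_filter]
  refine forall_congr' fun b => ?_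
  by_cases hb : b = 0
  · have hp : p.parts.count 0 = 0 := Multiset.count_eq_zero.mpr fun h => (p.parts_pos h).ne' rfl
    simp [hb, hp]
  · simp [hb]

end RowPartition

section NaturalCase

variable {m : ℕ}

theorem sortedParts_ne_zero (p : Nat.Partition m) (i : Fin (Multiset.card p.parts)) :
    sortedParts p i ≠ 0 := by
  have hi : sortedParts p i ∈ p.parts :=
    map_sortedParts p ▸ Multiset.mem_map_of_mem _ (mem_univ_val i)
  exact (p.parts_pos hi).ne'

theorem descFactorial_mul_Nmat (n : ℕ) (p q : Nat.Partition m) :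
    n.descFactorial (Multiset.card p.parts) * Nmat p q
      = Nat.card {A : ColSumMatrices q n // rowPartition q A = p} * multFact p := by
  have hcount := card_embedding_mul_card_rowSum_colSum (ι := Fin n) (sortedParts p)
    (sortedParts_ne_zero p) (sortedParts q)
  rw [Nat.card_eq_fintype_card (α := Fin _ ↪ Fin n), Fintype.card_embedding_eq, Fintype.card_fin,
    Fintype.card_fin, ← Nmat_eq_card] at hcount
  rw [hcount, multFact_eq_prod_factorial]
  congr 1
  exact Nat.card_congr
    { toFun A := ⟨⟨A.1, A.2.1⟩, (rowPartition_eq_iff q ⟨A.1, A.2.1⟩ p).mpr A.2.2⟩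
      invFun A := ⟨A.1.1, A.1.2, (rowPartition_eq_iff q A.1 p).mp A.2⟩
      left_inv _ := rfl
      right_inv _ := rfl }

theorem prod_map_parts_eq_prod_sortedParts {M : Type*} [CommMonoid M] (q : Nat.Partition m)
    (g : ℕ → M) : (q.parts.map g).prod = ∏ j, g (sortedParts q j) := by
  conv_lhs => rw [← map_sortedParts q]
  rw [Multiset.map_map, prod_eq_multiset_prod]
  rfl

theorem eval_descPochhammer (x : ℝ) (n : ℕ) : (descPochhammer ℝ n).eval x = fallFac x n :=
  descPochhammer_eval_eq_prod_range n x

theorem fallFac_natCast (n k : ℕ) : fallFac n k = n.descFactorial k := by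
  rw [← eval_descPochhammer, descPochhammer_eval_eq_descFactorial]

theorem sum_fallFac_natCast_div_multFact_mul_Nmat (n : ℕ) (q : Nat.Partition m) :
    ∑ p : Nat.Partition m, fallFac n (Multiset.card p.parts) / multFact p * Nmat p q
      = (q.parts.map fun a => fallFac n a / Nat.factorial a).prod := by
  have hterm : ∀ p : Nat.Partition m, fallFac n (Multiset.card p.parts) / multFact p * Nmat p q
      = Nat.card {A : ColSumMatrices q n // rowPartition q A = p} := by
    intro p
    have hp : (multFact p : ℝ) ≠ 0 := by simp [multFact, prod_ne_zero_iff, Nat.factorial_ne_zero]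
    rw [div_mul_eq_mul_div, div_eq_iff hp, fallFac_natCast]
    exact_mod_cast descFactorial_mul_Nmat n p q
  have hchoose : ∀ a : ℕ, fallFac n a / Nat.factorial a = n.choose a := fun a => by
    rw [Nat.cast_choose_eq_descPochhammer_div, eval_descPochhammer]
  rw [sum_congr rfl fun p _ => hterm p, ← Nat.cast_sum, ← Nat.card_sigma,
    ← Nat.card_congr (Equiv.sigmaFiberEquiv (rowPartition q)).symm, card_colSum_eq,
    prod_map_parts_eq_prod_sortedParts]
  simp [hchoose]

end NaturalCase

theorem Polynomial.eq_of_eval_natCast_eq {R : Type*} [CommRing R] [IsDomain R] [CharZero R]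
    {P Q : Polynomial R} (h : ∀ n : ℕ, P.eval (n : R) = Q.eval (n : R)) : P = Q :=
  P.eq_of_infinite_eval_eq Q <| (Set.infinite_range_of_injective Nat.cast_injective).mono <| by
    rintro _ ⟨n, rfl⟩
    exact h n

open Polynomial in
theorem stmt0 (m : ℕ) (q : Nat.Partition m) (x : ℝ) :
    ∑ p : Nat.Partition m,
      fallFac x (Multiset.card p.parts) / multFact p * Nmat p q
    = (q.parts.map fun a => fallFac x a / Nat.factorial a).prod := by
  let P : ℝ[X] := ∑ p : Nat.Partition m,
    C ((Nmat p q : ℝ) / multFact p) * descPochhammer ℝ (Multiset.card p.parts)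
  let Q : ℝ[X] := (q.parts.map fun a => C ((Nat.factorial a : ℝ)⁻¹) * descPochhammer ℝ a).prod
  have hP : ∀ y, P.eval y
      = ∑ p : Nat.Partition m, fallFac y (Multiset.card p.parts) / multFact p * Nmat p q := by
    intro y
    simp only [P, eval_finsetSum, eval_mul, eval_C, eval_descPochhammer]
    exact sum_congr rfl fun p _ => by ring
  have hQ : ∀ y, Q.eval y = (q.parts.map fun a => fallFac y a / Nat.factorial a).prod := by
    intro y
    simp only [Q, eval_multiset_prod, Multiset.map_map, Function.comp_def, eval_mul, eval_C,
      eval_descPochhammer, inv_mul_eq_div]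
  have hPQ : P = Q := Polynomial.eq_of_eval_natCast_eq fun n => by
    rw [hP, hQ, sum_fallFac_natCast_div_multFact_mul_Nmat]
  rw [← hP, ← hQ, hPQ]
end

section
/- Let m be a positive integer. Then ∑_{p,q ⊢ m} (−1)^{|[p]|+|[q]|} · (|[p]| choose [p]) · (|[q]| choose [q]) · N(p,q) = 1^{\underline{m}} / m!; in particular this sum equals 1 if m = 1 and equals 0 if m > 1. Here (|[p]| choose [p]) denotes the multinomial coefficient |[p]|! / [p]! and the sum ranges over all pairs of integer partitions p, q of m. -/
open Finset

/-- The multinomial coefficient `(|[p]| choose [p]) = |[p]|! / [p]!`. -/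
def multinom {m : ℕ} (p : Nat.Partition m) : ℕ :=
  Nat.multinomial p.parts.toFinset (fun i => p.parts.count i)

open scoped Nat

/-!
Group the sum over `q` by the number `l` of parts. A partition with `l` parts is the multiset of
`multinom q` ordered `l`-tuples, and permuting the columns of a 0/1 matrix permutes its column
sums, so `∑_{|[q]| = l} multinom q * N(p, q)` counts the 0/1 matrices with `l` columns, none of
them zero, whose row sums are the parts of `p`. Removing the first column shows that the
alternating count `A(r) = ∑_l (-1)^l #{such matrices with row sums r}` satisfies
`A(r) = [r = 0] - ∑_{∅ ≠ C ⊆ supp r} A(r - 1_C)`, whose solution is `(-1)^|r|`; so the sum over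
`q` is `(-1)^m` for every `p`. The same recursion for compositions of `m` gives
`∑_p (-1)^|[p]| multinom p = [m = 0] - [m = 1]`, so the double sum is `[m ≤ 1] = fallFac 1 m / m!`.
-/

theorem card_eq_sum_card_of_mem_iff_head_tail {β : Type*} {l : ℕ} {S : Finset (Fin (l + 1) → β)}
    {B : Finset β} {S' : β → Finset (Fin l → β)}
    (h : ∀ f, f ∈ S ↔ f 0 ∈ B ∧ (fun j => f j.succ) ∈ S' (f 0)) :
    #S = ∑ b ∈ B, #(S' b) := by
  rw [← card_sigma]
  refine card_bij' (fun f _ => ⟨f 0, fun j => f j.succ⟩) (fun x _ => Fin.cons x.1 x.2) ?_ ?_ ?_ ?_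
  · intro f hf
    simpa using (h f).1 hf
  · rintro ⟨b, g⟩ hx
    rw [h]
    simpa using hx
  · intro f _
    exact Fin.cons_self_tail f
  · rintro ⟨b, g⟩ _
    simp

theorem sum_range_neg_one_pow_succ_mul_sum {β : Type*} (s : Finset β) (M : ℕ) (x : β → ℕ → ℤ) :
    ∑ l ∈ range M, (-1 : ℤ) ^ (l + 1) * ∑ b ∈ s, x b l =
      -∑ b ∈ s, ∑ l ∈ range M, (-1) ^ l * x b l := by
  simp only [mul_sum, ← sum_neg_distrib]
  rw [sum_comm]
  exact sum_congr rfl fun _ _ => sum_congr rfl fun _ _ => by ring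

theorem neg_one_pow_eq_of_add_eq {R : Type*} [Monoid R] [HasDistribNeg R] {a c n : ℕ}
    (h : a + c = n) : (-1 : R) ^ a = (-1) ^ n * (-1) ^ c := by
  rw [← h, pow_add, mul_assoc, ← pow_add, Even.neg_one_pow ⟨c, rfl⟩, mul_one]

def tupleCompositions (m l : ℕ) : Finset (Fin l → ℕ) :=
  (Finset.Nat.antidiagonalTuple l m).filter fun d => ∀ j, 0 < d j

theorem mem_tupleCompositions {m l : ℕ} {d : Fin l → ℕ} :
    d ∈ tupleCompositions m l ↔ (∀ j, 0 < d j) ∧ ∑ j, d j = m := by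
  rw [tupleCompositions, mem_filter, Finset.Nat.mem_antidiagonalTuple, and_comm]

theorem card_tupleCompositions_zero (m : ℕ) :
    #(tupleCompositions m 0) = if m = 0 then 1 else 0 := by
  split_ifs with hm
  · rw [card_eq_one]
    refine ⟨Fin.elim0, ?_⟩
    ext d
    simp [mem_tupleCompositions, hm, Subsingleton.elim d Fin.elim0]
  · rw [card_eq_zero, eq_empty_iff_forall_notMem]
    intro d hd
    exact hm (by simpa using (mem_tupleCompositions.1 hd).2.symm)

theorem card_tupleCompositions_succ (m l : ℕ) :
    #(tupleCompositions m (l + 1)) = ∑ a ∈ range m, #(tupleCompositions a l) := by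
  have hhead : #(tupleCompositions m (l + 1)) =
      ∑ b ∈ Icc 1 m, #(tupleCompositions (m - b) l) := by
    apply card_eq_sum_card_of_mem_iff_head_tail
    intro d
    simp only [mem_tupleCompositions, Fin.forall_fin_succ, Fin.sum_univ_succ, mem_Icc]
    constructor
    · rintro ⟨⟨h0, hs⟩, hsum⟩
      exact ⟨⟨h0, by omega⟩, hs, by omega⟩
    · rintro ⟨⟨h0, hle⟩, hs, hsum⟩
      exact ⟨⟨h0, hs⟩, by omega⟩
  rw [hhead, ← Finset.Ico_add_one_right_eq_Icc,
    sum_Ico_reflect (fun a => #(tupleCompositions a l)) 1 le_rfl, Nat.sub_self,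
    Nat.add_sub_cancel, range_eq_Ico]

theorem sum_neg_one_pow_mul_card_tupleCompositions {m M : ℕ} (hM : m < M) :
    ∑ l ∈ range M, (-1 : ℤ) ^ l * #(tupleCompositions m l) =
      (if m = 0 then 1 else 0) - if m = 1 then 1 else 0 := by
  induction m using Nat.strong_induction_on generalizing M with
  | _ m ih =>
  obtain ⟨M, rfl⟩ : ∃ M', M = M' + 1 := ⟨M - 1, by omega⟩
  rw [sum_range_succ', card_tupleCompositions_zero]
  simp only [card_tupleCompositions_succ, Nat.cast_sum]
  rw [sum_range_neg_one_pow_succ_mul_sum,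
    sum_congr rfl fun a ha => ih a (mem_range.1 ha) (by rw [mem_range] at ha; omega),
    sum_sub_distrib, sum_ite_eq', sum_ite_eq']
  simp only [mem_range]
  split_ifs <;> omega

section SetCompositions

variable {ι : Type*} [Fintype ι] [DecidableEq ι]

-- A 0/1 matrix with row sums `r` and no zero column, stored as the tuple of its columns.
def setCompositions (r : ι → ℕ) (l : ℕ) : Finset (Fin l → Finset ι) :=
  {f | (∀ j, (f j).Nonempty) ∧ ∀ i, ∑ j, (if i ∈ f j then 1 else 0) = r i}

theorem mem_setCompositions {r : ι → ℕ} {l : ℕ} {f : Fin l → Finset ι} :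
    f ∈ setCompositions r l ↔
      (∀ j, (f j).Nonempty) ∧ ∀ i, ∑ j, (if i ∈ f j then 1 else 0) = r i := by
  simp [setCompositions]

theorem card_setCompositions_zero (r : ι → ℕ) :
    #(setCompositions r 0) = if r = 0 then 1 else 0 := by
  split_ifs with hr
  · rw [card_eq_one]
    refine ⟨Fin.elim0, ?_⟩
    ext f
    simp [mem_setCompositions, hr, Subsingleton.elim f Fin.elim0]
  · rw [card_eq_zero, eq_empty_iff_forall_notMem]
    intro f hf
    exact hr (funext fun i => by simpa using ((mem_setCompositions.1 hf).2 i).symm)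

theorem card_setCompositions_succ (r : ι → ℕ) (l : ℕ) :
    #(setCompositions r (l + 1)) = ∑ C ∈ ({i | r i ≠ 0} : Finset ι).powerset.erase ∅,
      #(setCompositions (fun i => r i - if i ∈ C then 1 else 0) l) := by
  apply card_eq_sum_card_of_mem_iff_head_tail
  intro f
  simp only [mem_setCompositions, Fin.forall_fin_succ, Fin.sum_univ_succ, mem_erase, mem_powerset,
    ← nonempty_iff_ne_empty, subset_iff, mem_filter, mem_univ, true_and]
  constructor
  · rintro ⟨⟨h0, hs⟩, hr⟩
    refine ⟨⟨h0, fun i hi => ?_⟩, hs, fun i => ?_⟩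
    · have := hr i
      simp only [hi, if_true] at this
      omega
    · have := hr i
      omega
  · rintro ⟨⟨h0, hsub⟩, hs, hr⟩
    refine ⟨⟨h0, hs⟩, fun i => ?_⟩
    have := hr i
    by_cases hi : i ∈ f 0
    · have := hsub hi
      simp only [hi, if_true] at *
      omega
    · simp only [hi, if_false] at *
      omega

theorem sum_sub_indicator_add_card {r : ι → ℕ} {C : Finset ι} (hC : ∀ i ∈ C, r i ≠ 0) :
    ∑ i, (r i - if i ∈ C then 1 else 0) + #C = ∑ i, r i := by
  have hcard : #C = ∑ i, if i ∈ C then 1 else 0 := by simp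
  rw [hcard, ← sum_add_distrib]
  refine sum_congr rfl fun i _ => ?_
  by_cases hi : i ∈ C
  · have := hC i hi
    simp only [hi, if_true]
    omega
  · simp [hi]

theorem sum_neg_one_pow_mul_card_setCompositions (r : ι → ℕ) {M : ℕ} (hM : ∑ i, r i < M) :
    ∑ l ∈ range M, (-1 : ℤ) ^ l * #(setCompositions r l) = (-1) ^ ∑ i, r i := by
  induction hn : ∑ i, r i using Nat.strong_induction_on generalizing r M with
  | _ n ih =>
  obtain ⟨M, rfl⟩ : ∃ M', M = M' + 1 := ⟨M - 1, by omega⟩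
  have hrec : ∀ C ∈ ({i | r i ≠ 0} : Finset ι).powerset.erase ∅,
      ∑ l ∈ range M, (-1 : ℤ) ^ l *
        #(setCompositions (fun i => r i - if i ∈ C then 1 else 0) l) = (-1) ^ n * (-1) ^ #C := by
    intro C hC
    simp only [mem_erase, mem_powerset, subset_iff, mem_filter, mem_univ, true_and] at hC
    have hsum := sum_sub_indicator_add_card hC.2
    have hCpos : 0 < #C := card_pos.2 (nonempty_iff_ne_empty.2 hC.1)
    rw [ih _ (by omega) _ (by omega) rfl]
    exact neg_one_pow_eq_of_add_eq (hsum.trans hn)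
  have hsigns : ∑ C ∈ ({i | r i ≠ 0} : Finset ι).powerset.erase ∅, (-1 : ℤ) ^ #C =
      (if r = 0 then 1 else 0) - 1 := by
    rw [sum_erase_eq_sub (empty_mem_powerset _), sum_powerset_neg_one_pow_card]
    simp [filter_eq_empty_iff, funext_iff]
  rw [sum_range_succ', card_setCompositions_zero]
  simp only [card_setCompositions_succ, Nat.cast_sum]
  rw [sum_range_neg_one_pow_succ_mul_sum, sum_congr rfl hrec, ← mul_sum, hsigns]
  split_ifs with hr
  · subst hr
    simp [← hn]
  · simp

theorem comp_perm_mem_setCompositions {r : ι → ℕ} {l : ℕ} {f : Fin l → Finset ι}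
    (hf : f ∈ setCompositions r l) (σ : Equiv.Perm (Fin l)) : f ∘ σ ∈ setCompositions r l := by
  rw [mem_setCompositions] at hf ⊢
  exact ⟨fun j => hf.1 (σ j), fun i => by
    simpa only [Function.comp_apply] using (Equiv.sum_comp σ _).trans (hf.2 i)⟩

theorem card_setCompositions_colSizes_comp_perm (r : ι → ℕ) {l : ℕ} (d : Fin l → ℕ)
    (σ : Equiv.Perm (Fin l)) :
    #{f ∈ setCompositions r l | (fun j => #(f j)) = d ∘ σ} =
      #{f ∈ setCompositions r l | (fun j => #(f j)) = d} := by
  refine card_nbij' (· ∘ σ.symm) (· ∘ σ) ?_ ?_ ?_ ?_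
  · intro f hf
    simp only [coe_filter, Set.mem_ofPred_eq] at hf ⊢
    refine ⟨comp_perm_mem_setCompositions hf.1 _, funext fun j => ?_⟩
    simpa using congrFun hf.2 (σ.symm j)
  · intro f hf
    simp only [coe_filter, Set.mem_ofPred_eq] at hf ⊢
    exact ⟨comp_perm_mem_setCompositions hf.1 _, funext fun j => congrFun hf.2 (σ j)⟩
  · intro f _; simp [Function.comp_assoc]
  · intro f _; simp [Function.comp_assoc]

theorem sum_card_setCompositions_colSizes {r : ι → ℕ} {m : ℕ} (hr : ∑ i, r i = m) (l : ℕ) :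
    ∑ d ∈ tupleCompositions m l, #{f ∈ setCompositions r l | (fun j => #(f j)) = d} =
      #(setCompositions r l) := by
  refine (card_eq_sum_card_fiberwise fun f hf => ?_).symm
  rw [mem_coe, mem_setCompositions] at hf
  rw [mem_coe, mem_tupleCompositions]
  refine ⟨fun j => card_pos.2 (hf.1 j), ?_⟩
  calc ∑ j, #(f j) = ∑ j, ∑ i, (if i ∈ f j then 1 else 0) := by simp
    _ = m := by rw [sum_comm, ← hr]; exact sum_congr rfl fun i _ => hf.2 i

end SetCompositions

section PermutedTuples

variable {ι α : Type*} [Fintype ι] [DecidableEq α]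

theorem card_fiber_eq_count_map (d : ι → α) (a : α) :
    Fintype.card {j // d j = a} = (univ.val.map d).count a := by
  rw [Fintype.card_subtype, Multiset.count_map, card_def, filter_val]
  simp only [eq_comm]

theorem exists_perm_comp_eq_of_map_eq {d e : ι → α} (h : univ.val.map e = univ.val.map d) :
    ∃ σ : Equiv.Perm ι, e = d ∘ σ := by
  have hfib (a : α) : Fintype.card {j // e j = a} = Fintype.card {j // d j = a} := by
    rw [card_fiber_eq_count_map, card_fiber_eq_count_map, h]
  exact ⟨Equiv.ofFiberEquiv fun a => Fintype.equivOfCardEq (hfib a),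
    funext fun j => (Equiv.ofFiberEquiv_map _ j).symm⟩

theorem card_image_comp_perm_mul_card_stabilizer [DecidableEq ι] (d : ι → α) :
    #(univ.image fun σ : Equiv.Perm ι => d ∘ σ) * Fintype.card {σ : Equiv.Perm ι // d ∘ σ = d} =
      (Fintype.card ι)! := by
  rw [← Fintype.card_perm, Fintype.card_subtype, ← card_univ,
    card_eq_sum_card_image (fun σ : Equiv.Perm ι => d ∘ σ) univ, eq_comm]
  refine sum_const_nat fun e he => ?_
  obtain ⟨τ, -, rfl⟩ := mem_image.1 he
  refine card_nbij' (· * τ⁻¹) (· * τ) ?_ ?_ ?_ ?_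
  · intro σ hσ
    simp only [coe_filter, mem_univ, true_and, Set.mem_ofPred_eq] at hσ ⊢
    rw [Equiv.Perm.coe_mul, ← Function.comp_assoc, hσ, Function.comp_assoc, ← Equiv.Perm.coe_mul,
      mul_inv_cancel, Equiv.Perm.coe_one, Function.comp_id]
  · intro σ hσ
    simp only [coe_filter, mem_univ, true_and, Set.mem_ofPred_eq] at hσ ⊢
    rw [Equiv.Perm.coe_mul, ← Function.comp_assoc, hσ]
  · intro σ _; simp
  · intro σ _; simp

theorem card_image_comp_perm [DecidableEq ι] (d : ι → α) :
    #(univ.image fun σ : Equiv.Perm ι => d ∘ σ) =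
      Nat.multinomial (univ.val.map d).toFinset (univ.val.map d).count := by
  have hstab : Fintype.card {σ : Equiv.Perm ι // d ∘ σ = d} =
      ∏ a ∈ (univ.val.map d).toFinset, ((univ.val.map d).count a)! := by
    rw [DomMulAct.stabilizer_card']
    exact prod_congr rfl fun a _ => by rw [card_fiber_eq_count_map]
  have hspec := Nat.multinomial_spec (univ.val.map d).toFinset (univ.val.map d).count
  rw [Multiset.toFinset_sum_count_eq, Multiset.card_map, ← hstab, ← card_def, card_univ,
    ← card_image_comp_perm_mul_card_stabilizer d] at hspec
  exact (Nat.eq_of_mul_eq_mul_left (Fintype.card_pos_iff.2 ⟨⟨1, rfl⟩⟩)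
    (hspec.trans (mul_comm _ _))).symm

end PermutedTuples

theorem List.ofFn_getD_of_length_eq {α : Type*} {L : List α} {l : ℕ} (a : α) (h : L.length = l) :
    List.ofFn (fun j : Fin l => L.getD j a) = L := by
  subst h
  simp

namespace Nat.Partition

def partsTuple {m : ℕ} (q : Nat.Partition m) (l : ℕ) : Fin l → ℕ :=
  fun j => (partsList q).getD j 0

theorem partsTuple_apply {m : ℕ} (q : Nat.Partition m) (l : ℕ) (j : Fin l) :
    q.partsTuple l j = (partsList q).getD j 0 :=
  rfl

theorem map_partsTuple {m l : ℕ} {q : Nat.Partition m} (hq : Multiset.card q.parts = l) :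
    univ.val.map (q.partsTuple l) = q.parts := by
  have hlen : (partsList q).length = l := by rw [partsList, Multiset.length_sort, hq]
  rw [Fin.univ_val_map]
  unfold partsTuple
  rw [List.ofFn_getD_of_length_eq 0 hlen, partsList, Multiset.sort_eq]

theorem card_parts_le {m : ℕ} (q : Nat.Partition m) : Multiset.card q.parts ≤ m := by
  simpa [q.parts_sum] using Multiset.card_nsmul_le_sum (a := 1) fun _ hx => q.parts_pos hx

theorem partsTuple_pos {m : ℕ} (q : Nat.Partition m) (j : Fin (Multiset.card q.parts)) :
    0 < q.partsTuple _ j := by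
  have hj : q.partsTuple _ j ∈ univ.val.map (q.partsTuple _) :=
    Multiset.mem_map_of_mem _ (mem_univ j)
  rw [map_partsTuple rfl] at hj
  exact q.parts_pos hj

theorem sum_partsTuple {m : ℕ} (q : Nat.Partition m) :
    ∑ j, q.partsTuple (Multiset.card q.parts) j = m := by
  rw [sum_eq_multiset_sum, map_partsTuple rfl, q.parts_sum]

end Nat.Partition

theorem sum_partitions_multinom_smul_eq_sum_tupleCompositions {R : Type*} [AddCommMonoid R]
    (m l : ℕ) (G : (Fin l → ℕ) → R) (hG : ∀ d (σ : Equiv.Perm (Fin l)), G (d ∘ σ) = G d) :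
    ∑ q : Nat.Partition m with Multiset.card q.parts = l, multinom q • G (q.partsTuple l) =
      ∑ d ∈ tupleCompositions m l, G d := by
  set P := (univ : Finset (Nat.Partition m)).filter fun q => Multiset.card q.parts = l
  have hmaps : ∀ d ∈ tupleCompositions m l, univ.val.map d ∈ P.image Nat.Partition.parts := by
    intro d hd
    rw [mem_tupleCompositions] at hd
    refine mem_image.2 ⟨⟨univ.val.map d, fun {a} ha => ?_, hd.2⟩, ?_, rfl⟩
    · obtain ⟨j, -, rfl⟩ := Multiset.mem_map.1 ha
      exact hd.1 j
    · simp [P]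
  have hfiber : ∀ q ∈ P, {d ∈ tupleCompositions m l | univ.val.map d = q.parts} =
      univ.image fun σ : Equiv.Perm (Fin l) => q.partsTuple l ∘ σ := by
    intro q hq
    have hmap := Nat.Partition.map_partsTuple (mem_filter.1 hq).2
    ext d
    simp only [mem_filter, mem_image, mem_univ, true_and, mem_tupleCompositions]
    constructor
    · rintro ⟨-, hd⟩
      obtain ⟨σ, rfl⟩ := exists_perm_comp_eq_of_map_eq (hd.trans hmap.symm)
      exact ⟨σ, rfl⟩
    · rintro ⟨σ, rfl⟩
      have hσ : univ.val.map (q.partsTuple l ∘ σ) = q.parts := by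
        rw [← Multiset.map_map, Multiset.map_univ_val_equiv, hmap]
      refine ⟨⟨fun j => q.parts_pos ?_, ?_⟩, hσ⟩
      · rw [← hσ]
        exact Multiset.mem_map_of_mem _ (mem_univ j)
      · rw [sum_eq_multiset_sum, hσ, q.parts_sum]
  rw [← sum_fiberwise_of_maps_to hmaps, sum_image fun q _ q' _ h => Nat.Partition.ext h]
  refine sum_congr rfl fun q hq => ?_
  rw [hfiber q hq, sum_congr rfl (g := fun _ => G (q.partsTuple l)) fun d hd => ?_, sum_const,
    card_image_comp_perm, Nat.Partition.map_partsTuple (mem_filter.1 hq).2]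
  · rfl
  · obtain ⟨σ, -, rfl⟩ := mem_image.1 hd
    exact hG _ σ

theorem Nmat_eq_card_setCompositions {m : ℕ} (p q : Nat.Partition m) :
    Nmat p q = #{f ∈ setCompositions (p.partsTuple (Multiset.card p.parts))
      (Multiset.card q.parts) | (fun j => #(f j)) = q.partsTuple _} := by
  rw [Nmat, Nat.card_eq_fintype_card, Fintype.card_subtype]
  refine card_nbij' (fun M j => {i | M i j}) (fun f i j => decide (i ∈ f j)) ?_ ?_ ?_ ?_
  · intro M hM
    simp only [coe_filter, mem_univ, true_and, Set.mem_ofPred_eq] at hM ⊢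
    have hcol (j) : #{i | M i j} = q.partsTuple _ j := by rw [card_filter]; exact hM.2 j
    refine ⟨mem_setCompositions.2 ⟨fun j => ?_, fun i => ?_⟩, funext hcol⟩
    · rw [← Finset.card_pos, hcol]
      exact q.partsTuple_pos j
    · simpa [Nat.Partition.partsTuple_apply] using hM.1 i
  · intro f hf
    simp only [coe_filter, mem_univ, true_and, Set.mem_ofPred_eq, mem_setCompositions] at hf ⊢
    refine ⟨fun i => by simpa [Nat.Partition.partsTuple_apply] using hf.1.2 i, fun j => ?_⟩
    rw [← Nat.Partition.partsTuple_apply, ← congrFun hf.2 j]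
    simp
  · intro M _; ext; simp
  · intro f _; ext; simp

theorem sum_partitions_neg_one_pow_mul_multinom_mul {m : ℕ} (G : ∀ l, (Fin l → ℕ) → ℤ)
    (hG : ∀ l d (σ : Equiv.Perm (Fin l)), G l (d ∘ σ) = G l d) :
    ∑ q : Nat.Partition m, (-1 : ℤ) ^ Multiset.card q.parts * multinom q *
        G (Multiset.card q.parts) (q.partsTuple (Multiset.card q.parts)) =
      ∑ l ∈ range (m + 1), (-1) ^ l * ∑ d ∈ tupleCompositions m l, G l d := by
  rw [← sum_fiberwise_of_maps_to (g := fun q : Nat.Partition m => Multiset.card q.parts)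
    fun q _ => mem_range.2 (Nat.lt_succ_of_le q.card_parts_le)]
  refine sum_congr rfl fun l _ => ?_
  rw [← sum_partitions_multinom_smul_eq_sum_tupleCompositions m l (G l) (hG l), mul_sum]
  refine sum_congr rfl fun q hq => ?_
  have hGq : ∀ a b, a = b → G a (q.partsTuple a) = G b (q.partsTuple b) := by rintro a b rfl; rfl
  rw [hGq _ _ (mem_filter.1 hq).2, (mem_filter.1 hq).2, nsmul_eq_mul]
  ring

theorem sum_neg_one_pow_mul_multinom {m : ℕ} :
    ∑ q : Nat.Partition m, (-1 : ℤ) ^ Multiset.card q.parts * multinom q =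
      (if m = 0 then 1 else 0) - if m = 1 then 1 else 0 := by
  have key := sum_partitions_neg_one_pow_mul_multinom_mul (m := m) (fun _ _ => 1)
    fun _ _ _ => rfl
  simp only [mul_one, sum_const, nsmul_eq_mul] at key
  rw [key]
  exact sum_neg_one_pow_mul_card_tupleCompositions (lt_add_one m)

theorem sum_neg_one_pow_mul_multinom_mul_Nmat {m : ℕ} (p : Nat.Partition m) :
    ∑ q, (-1 : ℤ) ^ Multiset.card q.parts * multinom q * Nmat p q = (-1) ^ m := by
  simp only [Nmat_eq_card_setCompositions]
  set r := p.partsTuple (Multiset.card p.parts)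
  have hr : ∑ i, r i = m := p.sum_partsTuple
  rw [sum_partitions_neg_one_pow_mul_multinom_mul
    (fun l d => (#{f ∈ setCompositions r l | (fun j => #(f j)) = d} : ℤ))
    fun l d σ => by rw [card_setCompositions_colSizes_comp_perm]]
  simp only [← Nat.cast_sum, sum_card_setCompositions_colSizes hr]
  have h := sum_neg_one_pow_mul_card_setCompositions r (M := m + 1) (by omega)
  rwa [hr] at h

theorem sum_sum_neg_one_pow_mul_multinom_mul_multinom_mul_Nmat (m : ℕ) :
    ∑ p : Nat.Partition m, ∑ q : Nat.Partition m,
        (-1 : ℤ) ^ (Multiset.card p.parts + Multiset.card q.parts) *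
          multinom p * multinom q * Nmat p q = if m ≤ 1 then 1 else 0 := by
  calc _ = ∑ p : Nat.Partition m, (-1 : ℤ) ^ Multiset.card p.parts * multinom p *
        ∑ q, (-1 : ℤ) ^ Multiset.card q.parts * multinom q * Nmat p q := by
        simp only [mul_sum, pow_add]
        exact sum_congr rfl fun _ _ => sum_congr rfl fun _ _ => by ring
    _ = (-1) ^ m * ∑ p : Nat.Partition m, (-1 : ℤ) ^ Multiset.card p.parts * multinom p := by
        simp only [sum_neg_one_pow_mul_multinom_mul_Nmat, mul_sum]
        exact sum_congr rfl fun _ _ => by ring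
    _ = if m ≤ 1 then 1 else 0 := by
        rw [sum_neg_one_pow_mul_multinom]
        rcases m with _ | _ | m <;> simp

theorem fallFac_one_div_factorial (m : ℕ) : fallFac 1 m / m ! = if m ≤ 1 then 1 else 0 := by
  split_ifs with hm
  · interval_cases m <;> simp [fallFac]
  · rw [fallFac, prod_eq_zero (mem_range.2 (by omega : 1 < m)) (by norm_num), zero_div]

theorem stmt5_general (m : ℕ) :
    (∑ p : Nat.Partition m, ∑ q : Nat.Partition m,
        (-1 : ℝ) ^ (Multiset.card p.parts + Multiset.card q.parts) *
          multinom p * multinom q * Nmat p q)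
      = fallFac 1 m / Nat.factorial m ∧
    (m = 1 →
      (∑ p : Nat.Partition m, ∑ q : Nat.Partition m,
        (-1 : ℝ) ^ (Multiset.card p.parts + Multiset.card q.parts) *
          multinom p * multinom q * Nmat p q) = 1) ∧
    (1 < m →
      (∑ p : Nat.Partition m, ∑ q : Nat.Partition m,
        (-1 : ℝ) ^ (Multiset.card p.parts + Multiset.card q.parts) *
          multinom p * multinom q * Nmat p q) = 0) := by
  have hsum : (∑ p : Nat.Partition m, ∑ q : Nat.Partition m,
      (-1 : ℝ) ^ (Multiset.card p.parts + Multiset.card q.parts) *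
        multinom p * multinom q * Nmat p q) = if m ≤ 1 then 1 else 0 := by
    exact_mod_cast sum_sum_neg_one_pow_mul_multinom_mul_multinom_mul_Nmat m
  refine ⟨hsum.trans (fallFac_one_div_factorial m).symm, fun h => ?_, fun h => ?_⟩
  · rw [hsum, if_pos h.le]
  · rw [hsum, if_neg (Nat.not_le.2 h)]

theorem stmt5 (m : ℕ) (hm : 0 < m) :
    (∑ p : Nat.Partition m, ∑ q : Nat.Partition m,
        (-1 : ℝ) ^ (Multiset.card p.parts + Multiset.card q.parts) *
          multinom p * multinom q * Nmat p q)
      = fallFac 1 m / Nat.factorial m ∧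
    (m = 1 →
      (∑ p : Nat.Partition m, ∑ q : Nat.Partition m,
        (-1 : ℝ) ^ (Multiset.card p.parts + Multiset.card q.parts) *
          multinom p * multinom q * Nmat p q) = 1) ∧
    (1 < m →
      (∑ p : Nat.Partition m, ∑ q : Nat.Partition m,
        (-1 : ℝ) ^ (Multiset.card p.parts + Multiset.card q.parts) *
          multinom p * multinom q * Nmat p q) = 0) :=
  stmt5_general m
end

section
/- Let m and k be positive integers and let μ_1, …, μ_k be real numbers. Then ∑_{p ⊢ m} ((2|[p]|−1)!! / (−2)^{|[p]|}) · (1/[p]!) · e_p(μ_1, …, μ_k) = (1 / ((−2)^m m!)) · ∑_{q ⊢ m} (m choose q) · (2q−1)!! · m_q(μ_1, …, μ_k), where (m choose q) = m!/∏_i q_i! is the multinomial coefficient, (2q−1)!! = ∏_i (2q_i − 1)!!, and the sums range over all integer partitions p, respectively q, of m. -/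
open Finset

/-- The double factorial `(2n-1)!! = 1 · 3 · 5 ⋯ (2n-1)` (with `(-1)!! = 1` for `n = 0`). -/
def oddDoubleFac (n : ℕ) : ℕ := ∏ i ∈ Finset.range n, (2 * i + 1)

/-- The `j`-th elementary symmetric polynomial evaluated at `μ 0, …, μ (k-1)`
(it vanishes for `j > k`). -/
def esym (k j : ℕ) (μ : Fin k → ℝ) : ℝ :=
  ∑ s ∈ Finset.powersetCard j (Finset.univ : Finset (Fin k)), ∏ i ∈ s, μ i

/-- The monomial symmetric function `m_q` evaluated at `μ 0, …, μ (k-1)`: the sum of all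
distinct monomials `μ^α` over exponent vectors `α` whose multiset of non-zero entries is
the multiset of parts of `q`. -/
def msym {m : ℕ} (k : ℕ) (q : Nat.Partition m) (μ : Fin k → ℝ) : ℝ :=
  ∑ α ∈ (Finset.Nat.antidiagonalTuple k m).filter
      (fun α => Multiset.filter (· ≠ 0) (Multiset.map α (Finset.univ : Finset (Fin k)).val)
        = q.parts),
    ∏ i, μ i ^ α i

/-!
Since `(2a-1)!! = (-2)^a (-1/2)(-1/2-1)⋯(-1/2-a+1)`, the identity is the case `x = -1/2` of
`∑_{p ⊢ m} x(x-1)⋯(x-|[p]|+1) / [p]! · e_p = ∑_α ∏_i (x choose α_i) μ_i^{α_i}`, where `α` runs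
over exponent vectors of total degree `m` (the right-hand side of the theorem, regrouped by `α`).
Both sides are polynomials in `x`, so it suffices to check it at every natural number `n`. There
both sides are the coefficient of `t^m` in `∏_i (1 + μ_i t)^n`: on the right by the binomial
theorem in each factor; on the left by writing `∏_i (1 + μ_i t) = 1 + ∑_j e_j t^j` and expanding
the `n`-th power with the binomial and then the multinomial theorem, the multisets of exponents
`j` that occur being the partitions `p` of `m`, each with `|[p]|! / [p]!` orderings.
-/

namespace Multiset

lemma prod_map_pow_eq_pow_sum {M : Type*} [CommMonoid M] (x : M) (s : Multiset ℕ) :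
    (s.map (x ^ ·)).prod = x ^ s.sum := by
  induction s using Multiset.induction_on with
  | empty => simp
  | cons a s ih => simp [pow_add, ih]

lemma prod_map_filter_ne_zero {M : Type*} [CommMonoid M] {f : ℕ → M} (hf : f 0 = 1)
    (s : Multiset ℕ) : ((s.filter (· ≠ 0)).map f).prod = (s.map f).prod := by
  induction s using Multiset.induction_on with
  | empty => rfl
  | cons a s ih => by_cases ha : a = 0 <;> simp [ha, hf, ih]

lemma countPerms_mul_prod_factorial_count {α : Type*} [DecidableEq α] (s : Multiset α) :
    s.countPerms * ∏ i ∈ s.toFinset, (s.count i).factorial = (card s).factorial := by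
  rw [countPerms, Finsupp.multinomial_eq, toFinsupp_support, mul_comm, ← toFinset_sum_count_eq]
  convert Nat.multinomial_spec _ _ using 3
  exact funext (toFinsupp_apply s)

end Multiset

namespace Polynomial

lemma eq_of_eval_natCast_eq_s8 {R : Type*} [CommRing R] [IsDomain R] [CharZero R] {p q : R[X]}
    (h : ∀ n : ℕ, p.eval (n : R) = q.eval (n : R)) : p = q :=
  eq_of_infinite_eval_eq p q <| (Set.infinite_range_of_injective Nat.cast_injective).mono
    (by rintro _ ⟨n, rfl⟩; exact h n)

end Polynomial

namespace PowerSeries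

lemma coeff_prod_fin {R : Type*} [CommSemiring R] {k : ℕ} (f : Fin k → R⟦X⟧) (m : ℕ) :
    coeff m (∏ i, f i) = ∑ α ∈ Nat.antidiagonalTuple k m, ∏ i, coeff (α i) (f i) := by
  rw [coeff_prod, ← piAntidiag_univ_fin_eq_antidiagonalTuple, finsuppAntidiag, sum_map,
    ← sum_attach (piAntidiag univ m)]
  rfl

lemma coeff_one_add_C_mul_X_pow {R : Type*} [CommRing R] (r : R) (n a : ℕ) :
    coeff a ((1 + C r * X) ^ n) = n.choose a * r ^ a := by
  have h : (1 + C r * X : R⟦X⟧) ^ n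
      = rescale r (((1 + Polynomial.X) ^ n : Polynomial R) : R⟦X⟧) := by
    simp [rescale_X]
  rw [h, coeff_rescale, Polynomial.coeff_coe, Polynomial.coeff_one_add_X_pow, mul_comm]

lemma coeff_pow_sum_C_mul_X_pow {R : Type*} [CommSemiring R] (c : ℕ → R) {m N : ℕ}
    (hmN : m ≤ N) (l : ℕ) :
    coeff m ((∑ j ∈ Icc 1 N, C (c j) * X ^ j) ^ l)
      = ∑ p : m.Partition with Multiset.card p.parts = l,
          p.parts.countPerms * (p.parts.map c).prod := by
  have hprod (s : Multiset ℕ) :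
      (s.map fun j => C (c j) * X ^ j).prod = C (s.map c).prod * X ^ s.sum := by
    rw [Multiset.prod_map_mul, Multiset.prod_map_pow_eq_pow_sum, map_multiset_prod,
      Multiset.map_map]
    rfl
  simp_rw [sum_pow, map_sum, hprod, ← mul_assoc, ← map_natCast (C (R := R)), ← map_mul,
    coeff_C_mul_X_pow, ← sum_filter]
  refine sum_bij' (fun s hs => ⟨s, fun {i} hi => ?_, (mem_filter.1 hs).2.symm⟩)
    (fun p hp => Sym.mk p.parts (mem_filter.1 hp).2) ?_ ?_ (fun _ _ => rfl) (fun _ _ => rfl)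
    (fun _ _ => rfl)
  · exact (mem_Icc.1 (mem_sym_iff.1 (mem_filter.1 hs).1 i hi)).1
  · intro s hs; simp
  · intro p _
    simp only [mem_filter, mem_sym_iff, mem_Icc]
    exact ⟨fun i hi => ⟨p.parts_pos hi, (p.le_of_mem_parts hi).trans hmN⟩, p.parts_sum.symm⟩

end PowerSeries

lemma fallFac_eq_eval_descPochhammer (x : ℝ) (n : ℕ) :
    fallFac x n = (descPochhammer ℝ n).eval x :=
  (descPochhammer_eval_eq_prod_range n x).symm

lemma fallFac_natCast_s8 (n l : ℕ) : fallFac n l = l.factorial * n.choose l := by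
  rw [fallFac_eq_eval_descPochhammer, descPochhammer_eval_eq_descFactorial,
    Nat.descFactorial_eq_factorial_mul_choose]
  push_cast; rfl

lemma oddDoubleFac_eq (a : ℕ) : (oddDoubleFac a : ℝ) = (-2) ^ a * fallFac (-1/2) a := by
  rw [oddDoubleFac, fallFac, pow_eq_prod_const, ← prod_mul_distrib, Nat.cast_prod]
  refine prod_congr rfl fun i _ => ?_
  push_cast; ring

section PowerSeries

open PowerSeries

lemma prod_one_add_C_mul_X_eq_one_add_sum_esym {k N : ℕ} (hkN : k ≤ N) (μ : Fin k → ℝ) :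
    ∏ i, (1 + C (μ i) * X : ℝ⟦X⟧) = 1 + ∑ j ∈ Icc 1 N, C (esym k j μ) * X ^ j := by
  have hcard : ∀ t ∈ (univ : Finset (Fin k)).powerset, #t ∈ range (N + 1) := fun t _ =>
    mem_range.2 (Nat.lt_succ_of_le ((card_le_univ t).trans (by simpa using hkN)))
  have hlayer (j : ℕ) :
      ∑ t ∈ powersetCard j univ, ∏ i ∈ t, C (μ i) * X = C (esym k j μ) * X ^ j := by
    rw [esym, map_sum, sum_mul]
    refine sum_congr rfl fun t ht => ?_
    rw [prod_mul_distrib, prod_const, map_prod, (mem_powersetCard.1 ht).2]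
  rw [prod_one_add, ← sum_fiberwise_of_maps_to hcard]
  simp_rw [← powersetCard_eq_filter, hlayer]
  rw [range_eq_Ico, sum_eq_sum_Ico_succ_bot (Nat.succ_pos N), zero_add, Nat.succ_eq_add_one,
    Ico_add_one_right_eq_Icc]
  simp [esym]

lemma sum_choose_mul_countPerms_mul_esym (n m k : ℕ) (μ : Fin k → ℝ) :
    ∑ p : m.Partition, (n.choose (Multiset.card p.parts) * p.parts.countPerms : ℝ) *
        (p.parts.map fun a => esym k a μ).prod
      = ∑ α ∈ Nat.antidiagonalTuple k m, ∏ i, (n.choose (α i) * μ i ^ α i) := by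
  have hcoeff := congrArg (coeff m) (prod_pow univ n fun i => (1 + C (μ i) * X : ℝ⟦X⟧))
  simp_rw [coeff_prod_fin, coeff_one_add_C_mul_X_pow] at hcoeff
  -- `N = k + m` exponents suffice both for `∏ i, (1 + μ i X)` and for the partitions of `m`.
  rw [hcoeff, prod_one_add_C_mul_X_eq_one_add_sum_esym (Nat.le_add_right k m), add_comm, add_pow]
  simp only [one_pow, mul_one, map_sum, ← map_natCast (C (R := ℝ)), mul_comm _ (C _), coeff_C_mul,
    coeff_pow_sum_C_mul_X_pow _ (Nat.le_add_left m k), mul_sum]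
  rw [← sum_filter_of_ne (p := fun p : m.Partition => Multiset.card p.parts ∈ range (n + 1)),
    ← sum_fiberwise_eq_sum_filter]
  · refine sum_congr rfl fun l _ => sum_congr rfl fun p hp => ?_
    rw [(mem_filter.1 hp).2, mul_assoc]
  · intro p _ hp
    by_contra hn
    rw [Nat.choose_eq_zero_of_lt (by simpa using hn)] at hp
    simp at hp

end PowerSeries

open Polynomial in
theorem sum_fallFac_div_multFact_mul_esym (x : ℝ) (m k : ℕ) (μ : Fin k → ℝ) :
    ∑ p : m.Partition, fallFac x (Multiset.card p.parts) / multFact p *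
        (p.parts.map fun a => esym k a μ).prod
      = ∑ α ∈ Nat.antidiagonalTuple k m, ∏ i, (fallFac x (α i) / (α i).factorial * μ i ^ α i) := by
  have key : ∑ p : m.Partition, C ((p.parts.map fun a => esym k a μ).prod / multFact p) *
        descPochhammer ℝ (Multiset.card p.parts)
      = ∑ α ∈ Nat.antidiagonalTuple k m,
          ∏ i, C (μ i ^ α i / (α i).factorial) * descPochhammer ℝ (α i) := by
    refine eq_of_eval_natCast_eq_s8 fun n => ?_
    simp only [eval_finsetSum, eval_prod, eval_mul, eval_C, ← fallFac_eq_eval_descPochhammer,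
      fallFac_natCast_s8]
    refine (sum_congr rfl fun p _ => ?_).trans ((sum_choose_mul_countPerms_mul_esym n m k μ).trans
      (sum_congr rfl fun α _ => prod_congr rfl fun i _ => ?_))
    · have hmf : (multFact p : ℝ) ≠ 0 := by
        exact_mod_cast prod_ne_zero_iff.2 fun _ _ => Nat.factorial_ne_zero _
      have hcp : (p.parts.countPerms * multFact p : ℝ) = (Multiset.card p.parts).factorial := by
        exact_mod_cast p.parts.countPerms_mul_prod_factorial_count
      rw [← hcp]
      field_simp
    · have := (α i).factorial_ne_zero
      field_simp
  have h := congrArg (eval x) key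
  simp only [eval_finsetSum, eval_prod, eval_mul, eval_C, ← fallFac_eq_eval_descPochhammer] at h
  refine (sum_congr rfl fun p _ => ?_).trans
    (h.trans (sum_congr rfl fun α _ => prod_congr rfl fun i _ => ?_)) <;> ring

lemma sum_prod_map_mul_msym (f : ℕ → ℝ) (hf : f 0 = 1) (m k : ℕ) (μ : Fin k → ℝ) :
    ∑ q : m.Partition, (q.parts.map f).prod * msym k q μ
      = ∑ α ∈ Nat.antidiagonalTuple k m, ∏ i, (f (α i) * μ i ^ α i) := by
  set fiber : m.Partition → Finset (Fin k → ℕ) := fun q => (Nat.antidiagonalTuple k m).filter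
    fun α => Multiset.filter (· ≠ 0) (Multiset.map α (univ : Finset (Fin k)).val) = q.parts
  have hunion : univ.biUnion fiber = Nat.antidiagonalTuple k m := by
    refine (biUnion_subset.2 fun q _ => filter_subset _ _).antisymm fun α hα => ?_
    refine mem_biUnion.2 ⟨Nat.Partition.ofSums m (univ.val.map α) ?_, mem_univ _,
      mem_filter.2 ⟨hα, rfl⟩⟩
    rw [← sum_eq_multiset_sum]
    exact Nat.mem_antidiagonalTuple.1 hα
  have hdisj : ((univ : Finset m.Partition) : Set m.Partition).PairwiseDisjoint fiber := by
    intro q _ q' _ hqq'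
    refine disjoint_left.2 fun α hα hα' => hqq' (Nat.Partition.ext ?_)
    exact (mem_filter.1 hα).2.symm.trans (mem_filter.1 hα').2
  rw [← hunion, sum_biUnion hdisj]
  refine sum_congr rfl fun q _ => ?_
  rw [msym, mul_sum]
  refine sum_congr rfl fun α hα => ?_
  rw [← (mem_filter.1 hα).2, Multiset.prod_map_filter_ne_zero hf, Multiset.map_map,
    prod_mul_distrib]
  rfl

theorem stmt8_general (m k : ℕ) (μ : Fin k → ℝ) :
    ∑ p : Nat.Partition m,
      ((oddDoubleFac (Multiset.card p.parts) : ℝ) / (-2) ^ (Multiset.card p.parts)) *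
        (1 / multFact p) * (p.parts.map fun a => esym k a μ).prod
    = (1 / ((-2) ^ m * Nat.factorial m)) *
        ∑ q : Nat.Partition m,
          ((Nat.factorial m : ℝ) / (q.parts.map fun a => Nat.factorial a).prod) *
            ((q.parts.map fun a => oddDoubleFac a).prod : ℝ) * msym k q μ := by
  have hodd (s : Multiset ℕ) : ((s.map fun a => oddDoubleFac a).prod : ℝ)
      = (-2) ^ s.sum * (s.map fun a => fallFac (-1/2) a).prod := by
    rw [Nat.cast_multiset_prod, Multiset.map_map, ← Multiset.prod_map_pow_eq_pow_sum,
      ← Multiset.prod_map_mul]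
    exact congrArg _ (Multiset.map_congr rfl fun a _ => oddDoubleFac_eq a)
  calc _ = ∑ p : m.Partition, fallFac (-1/2) (Multiset.card p.parts) / multFact p *
        (p.parts.map fun a => esym k a μ).prod := sum_congr rfl fun p _ => by
          rw [oddDoubleFac_eq]; field_simp
    _ = ∑ q : m.Partition, (q.parts.map fun a => fallFac (-1/2) a / a.factorial).prod *
        msym k q μ := by
          rw [sum_fallFac_div_multFact_mul_esym, sum_prod_map_mul_msym _ (by simp [fallFac])]
    _ = _ := by
          rw [mul_sum]
          refine sum_congr rfl fun q _ => ?_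
          rw [hodd, q.parts_sum, Multiset.prod_map_div, Nat.cast_multiset_prod, Multiset.map_map,
            Function.comp_def]
          field_simp

theorem stmt8 (m k : ℕ) (hm : 0 < m) (hk : 0 < k) (μ : Fin k → ℝ) :
    ∑ p : Nat.Partition m,
      ((oddDoubleFac (Multiset.card p.parts) : ℝ) / (-2) ^ (Multiset.card p.parts)) *
        (1 / multFact p) * (p.parts.map fun a => esym k a μ).prod
    = (1 / ((-2) ^ m * Nat.factorial m)) *
        ∑ q : Nat.Partition m,
          ((Nat.factorial m : ℝ) / (q.parts.map fun a => Nat.factorial a).prod) *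
            ((q.parts.map fun a => oddDoubleFac a).prod : ℝ) * msym k q μ :=
  stmt8_general m k μ
end

section
/- Let m and k be positive integers, let μ_1, …, μ_k be real numbers, and let Z_1, …, Z_k be independent standard Gaussian random variables. Then E[(Z_1² μ_1 + ⋯ + Z_k² μ_k)^m] = ∑_{q ⊢ m} (m choose q) · (2q−1)!! · m_q(μ_1, …, μ_k), where (m choose q) = m!/∏_i q_i! is the multinomial coefficient, (2q−1)!! = ∏_i (2q_i − 1)!!, and the sum ranges over all integer partitions q of m. -/
/-!
Expand the `m`-th power by the multinomial theorem. By independence, the monomial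
`∏ Z_i ^ (2 α_i)` has expectation `∏ E[Z^(2 α_i)] = ∏ (2 α_i - 1)!!`, the even moments of the
standard Gaussian (a Gamma-function integral). The coefficient `multinomial(α) · ∏ (2 α_i - 1)!!`
depends only on the partition formed by the non-zero `α_i`, so grouping the exponent vectors `α`
by that partition produces the monomial symmetric functions.
-/

open Finset MeasureTheory ProbabilityTheory

open Real
open scoped Nat

-- At `n = 0` the truncated subtraction gives `0‼ = 1`, in agreement with `(-1)!! = 1`.
lemma oddDoubleFac_eq_doubleFactorial (n : ℕ) : oddDoubleFac n = (2 * n - 1)‼ := by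
  induction n with
  | zero => rfl
  | succ n ih =>
    rw [oddDoubleFac, prod_range_succ, ← oddDoubleFac, ih, mul_comm]
    cases n with
    | zero => rfl
    | succ n => exact (Nat.doubleFactorial_add_two _).symm

lemma integral_pow_two_mul_mul_exp_neg_half_mul_sq (n : ℕ) :
    ∫ x : ℝ, x ^ (2 * n) * exp (-(1 / 2) * x ^ 2) = √(2 * π) * (2 * n - 1 : ℕ)‼ := by
  have h_even : ∫ x : ℝ, x ^ (2 * n) * exp (-(1 / 2) * x ^ 2)
      = 2 * ∫ x in Set.Ioi (0 : ℝ), x ^ ((2 * n : ℕ) : ℝ) * exp (-(1 / 2) * x ^ (2 : ℝ)) := by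
    rw [← integral_comp_abs (f := fun x => x ^ ((2 * n : ℕ) : ℝ) * exp (-(1 / 2) * x ^ (2 : ℝ)))]
    simp only [rpow_natCast, rpow_two, sq_abs, (even_two_mul n).pow_abs]
  rw [h_even, integral_rpow_mul_exp_neg_mul_rpow two_pos
    (neg_one_lt_zero.trans_le (Nat.cast_nonneg _)) (by norm_num)]
  have h_gamma_arg : (((2 * n : ℕ) : ℝ) + 1) / 2 = n + 1 / 2 := by push_cast; ring
  have h_scale : (1 / 2 : ℝ) ^ (-(((2 * n : ℕ) : ℝ) + 1) / 2) = 2 ^ n * √2 := by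
    rw [one_div, inv_rpow zero_le_two, ← rpow_neg zero_le_two, neg_div, neg_neg, h_gamma_arg,
      rpow_add two_pos, rpow_natCast, sqrt_eq_rpow]
  rw [h_gamma_arg, h_scale, Gamma_nat_add_half, sqrt_mul zero_le_two]
  field_simp

lemma integrable_pow_gaussianReal (μ : ℝ) (v : NNReal) (n : ℕ) :
    Integrable (fun x => x ^ n) (gaussianReal μ v) := by
  refine (integrable_norm_iff (by fun_prop)).1 ?_
  simpa using (memLp_id_gaussianReal (μ := μ) (v := v) n).integrable_norm_pow'

lemma integral_pow_two_mul_gaussianReal (n : ℕ) :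
    ∫ x, x ^ (2 * n) ∂(gaussianReal 0 1) = (2 * n - 1 : ℕ)‼ := by
  rw [integral_gaussianReal_eq_integral_smul one_ne_zero]
  have h_pdf (x : ℝ) : gaussianPDFReal 0 1 x • x ^ (2 * n)
      = (√(2 * π))⁻¹ * (x ^ (2 * n) * exp (-(1 / 2) * x ^ 2)) := by
    simp only [gaussianPDFReal, smul_eq_mul, NNReal.coe_one, mul_one, sub_zero]
    ring_nf
  simp_rw [h_pdf]
  rw [integral_const_mul, integral_pow_two_mul_mul_exp_neg_half_mul_sq, inv_mul_cancel_left₀]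
  positivity

lemma integral_sum_sq_mul_pow_pi_gaussianReal {ι : Type*} [Fintype ι] [DecidableEq ι]
    (μ : ι → ℝ) (m : ℕ) :
    ∫ x, (∑ i, x i ^ 2 * μ i) ^ m ∂(Measure.pi fun _ : ι => gaussianReal 0 1)
      = ∑ α ∈ piAntidiag univ m,
          ((Nat.multinomial univ α * ∏ i, (2 * α i - 1)‼ : ℕ) : ℝ) * ∏ i, μ i ^ α i := by
  have h_expand (x : ι → ℝ) : (∑ i, x i ^ 2 * μ i) ^ m
      = ∑ α ∈ piAntidiag univ m,
          ((Nat.multinomial univ α : ℝ) * ∏ i, μ i ^ α i) * ∏ i, x i ^ (2 * α i) := by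
    rw [sum_pow_eq_sum_piAntidiag]
    refine sum_congr rfl fun α _ => ?_
    simp_rw [mul_pow, ← pow_mul, prod_mul_distrib]
    ring
  simp_rw [h_expand]
  rw [integral_finsetSum _ fun α _ =>
    (Integrable.fintype_prod fun i => integrable_pow_gaussianReal 0 1 (2 * α i)).const_mul _]
  refine sum_congr rfl fun α _ => ?_
  rw [integral_const_mul, integral_fintype_prod_eq_prod (fun i x => x ^ (2 * α i))]
  simp_rw [integral_pow_two_mul_gaussianReal]
  push_cast
  ring

lemma prod_comp_eq_prod_map_parts {ι M : Type*} [Fintype ι] [CommMonoid M] {f : ℕ → M}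
    (hf : f 0 = 1) {α : ι → ℕ} {m : ℕ} {q : Nat.Partition m}
    (hq : Multiset.filter (· ≠ 0) (Multiset.map α univ.val) = q.parts) :
    ∏ i, f (α i) = (q.parts.map f).prod := by
  rw [← prod_filter_of_ne (p := fun i => α i ≠ 0) fun i _ hfi hαi => hfi (by rw [hαi, hf]),
    ← hq, Multiset.filter_map, Multiset.map_map]
  rfl

lemma sum_antidiagonalTuple_eq_sum_partition {M : Type*} [AddCommMonoid M] (k m : ℕ)
    (f : (Fin k → ℕ) → M) :
    ∑ α ∈ Nat.antidiagonalTuple k m, f α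
      = ∑ q : Nat.Partition m, ∑ α ∈ (Nat.antidiagonalTuple k m).filter
          (fun α => Multiset.filter (· ≠ 0) (Multiset.map α univ.val) = q.parts), f α := by
  rw [← sum_comm' (s := Nat.antidiagonalTuple k m) (f := fun α _ => f α)
    (t := fun α => univ.filter fun q : Nat.Partition m =>
      Multiset.filter (· ≠ 0) (Multiset.map α univ.val) = q.parts) (by simp)]
  refine sum_congr rfl fun α hα => ?_
  have hsum : (Multiset.map α univ.val).sum = m := Nat.mem_antidiagonalTuple.1 hα
  have h_fiber : univ.filter (fun q : Nat.Partition m =>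
      Multiset.filter (· ≠ 0) (Multiset.map α univ.val) = q.parts)
      = {Nat.Partition.ofSums m _ hsum} := by
    ext q
    simp [Nat.Partition.ext_iff, eq_comm]
  rw [h_fiber, sum_singleton]

lemma multinomial_mul_prod_doubleFactorial_eq {ι : Type*} [Fintype ι] {α : ι → ℕ} {m : ℕ}
    (hα : ∑ i, α i = m) {q : Nat.Partition m}
    (hq : Multiset.filter (· ≠ 0) (Multiset.map α univ.val) = q.parts) :
    ((Nat.multinomial univ α * ∏ i, (2 * α i - 1)‼ : ℕ) : ℝ)
      = (m ! : ℝ) / (q.parts.map fun a => a !).prod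
          * (q.parts.map fun a => (2 * a - 1)‼).prod := by
  have h_fac : ((q.parts.map fun a => a !).prod : ℝ) ≠ 0 := by
    rw [← prod_comp_eq_prod_map_parts Nat.factorial_zero hq]
    positivity
  have h_spec := Nat.multinomial_spec univ α
  rw [hα, prod_comp_eq_prod_map_parts Nat.factorial_zero hq] at h_spec
  rw [prod_comp_eq_prod_map_parts (f := fun a => (2 * a - 1)‼) rfl hq, ← h_spec]
  field_simp
  push_cast
  ring

theorem stmt9_general (m k : ℕ) (μ : Fin k → ℝ)
    {Ω : Type*} [MeasureSpace Ω] [IsProbabilityMeasure (ℙ : Measure Ω)]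
    (Z : Fin k → Ω → ℝ)
    (hindep : iIndepFun Z ℙ)
    (hZ : ∀ i, Measure.map (Z i) ℙ = gaussianReal 0 1) :
    ∫ ω, (∑ i, (Z i ω) ^ 2 * μ i) ^ m ∂ℙ
    = ∑ q : Nat.Partition m,
        ((Nat.factorial m : ℝ) / (q.parts.map fun a => Nat.factorial a).prod) *
          ((q.parts.map fun a => oddDoubleFac a).prod : ℝ) * msym k q μ := by
  have hZ_meas (i : Fin k) : AEMeasurable (Z i) ℙ :=
    .of_map_ne_zero (by rw [hZ i]; exact IsProbabilityMeasure.ne_zero _)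
  have h_law : Measure.map (fun ω i => Z i ω) ℙ = Measure.pi fun _ => gaussianReal 0 1 := by
    rw [hindep.map_fun_eq_pi_map hZ_meas]
    simp_rw [hZ]
  have h_cont : Continuous fun x : Fin k → ℝ => (∑ i, x i ^ 2 * μ i) ^ m := by fun_prop
  calc ∫ ω, (∑ i, (Z i ω) ^ 2 * μ i) ^ m ∂ℙ
      = ∫ x, (∑ i, x i ^ 2 * μ i) ^ m ∂(Measure.map (fun ω i => Z i ω) ℙ) :=
        (integral_map (aemeasurable_pi_lambda _ hZ_meas) h_cont.aestronglyMeasurable).symm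
    _ = ∑ q : Nat.Partition m, ∑ α ∈ (Nat.antidiagonalTuple k m).filter
          (fun α => Multiset.filter (· ≠ 0) (Multiset.map α univ.val) = q.parts),
          ((Nat.multinomial univ α * ∏ i, (2 * α i - 1)‼ : ℕ) : ℝ) * ∏ i, μ i ^ α i := by
      rw [h_law, integral_sum_sq_mul_pow_pi_gaussianReal,
        piAntidiag_univ_fin_eq_antidiagonalTuple, sum_antidiagonalTuple_eq_sum_partition]
    _ = _ := by
      refine sum_congr rfl fun q _ => ?_
      simp_rw [msym, mul_sum, oddDoubleFac_eq_doubleFactorial]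
      refine sum_congr rfl fun α hα => ?_
      obtain ⟨hα_sum, hα_parts⟩ := mem_filter.1 hα
      rw [multinomial_mul_prod_doubleFactorial_eq (Nat.mem_antidiagonalTuple.1 hα_sum) hα_parts]

theorem stmt9 (m k : ℕ) (hm : 0 < m) (hk : 0 < k) (μ : Fin k → ℝ)
    {Ω : Type*} [MeasureSpace Ω] [IsProbabilityMeasure (ℙ : Measure Ω)]
    (Z : Fin k → Ω → ℝ) (hZmeas : ∀ i, Measurable (Z i))
    (hindep : iIndepFun Z ℙ)
    (hZ : ∀ i, Measure.map (Z i) ℙ = gaussianReal 0 1) :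
    ∫ ω, (∑ i, (Z i ω) ^ 2 * μ i) ^ m ∂ℙ
    = ∑ q : Nat.Partition m,
        ((Nat.factorial m : ℝ) / (q.parts.map fun a => Nat.factorial a).prod) *
          ((q.parts.map fun a => oddDoubleFac a).prod : ℝ) * msym k q μ :=
  stmt9_general m k μ Z hindep hZ
end
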